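/- arXiv:math/0409224 — 3 statements merged into one kernel-verified Lean document; each statement's English description precedes it below -/
import Mathlib

section
/- Let V be a finite-dimensional complex vector space with a nondegenerate alternating bilinear form Ω, and suppose V is the internal direct sum of subspaces V_p indexed by p ∈ ℤ (all but finitely many zero) such that Ω(v,w) = 0 whenever v ∈ V_p, w ∈ V_q and p + q ≠ 1. If moreover dim V = 2·dim V_0, then V_p = 0 for all p ∉ {0,1}, dim V_1 = dim V_0, and the subspaces V_0 and V_1 are Lagrangian (i.e., Ω vanishes identically on each of them and each has dimension (dim V)/2). -/
open Module

theorem weight_aux_le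
    (V : Type*) [AddCommGroup V] [Module ℂ V] [FiniteDimensional ℂ V]
    (Ω : V →ₗ[ℂ] V →ₗ[ℂ] ℂ)
    (hnd : ∀ v : V, (∀ w : V, Ω v w = 0) → v = 0)
    (Vp : ℤ → Submodule ℂ V)
    (hint : DirectSum.IsInternal Vp)
    (hpair : ∀ (p q : ℤ) (v w : V), v ∈ Vp p → w ∈ Vp q → p + q ≠ 1 → Ω v w = 0)
    (p : ℤ) :
    Module.finrank ℂ (Vp p) ≤ Module.finrank ℂ (Vp (1 - p)) := by
  let f : Vp p →ₗ[ℂ] Module.Dual ℂ (Vp (1 - p)) :=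
    ((Vp (1 - p)).subtype.dualMap) ∘ₗ (Ω ∘ₗ (Vp p).subtype)
  have hinj : Function.Injective f := by
    rw [← LinearMap.ker_eq_bot, LinearMap.ker_eq_bot']
    intro v hv
    have hzero : ∀ w : V, Ω v.1 w = 0 := by
      have hK : (⊤ : Submodule ℂ V) ≤ LinearMap.ker (Ω v.1) := by
        rw [← hint.submodule_iSup_eq_top]
        apply iSup_le
        intro r w' hw'
        rw [LinearMap.mem_ker]
        by_cases hr : r = 1 - p
        · subst hr
          have := LinearMap.congr_fun hv ⟨w', hw'⟩
          simpa [f] using this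
        · exact hpair p r v.1 w' v.2 hw' (by omega)
      intro w
      simpa using hK (Submodule.mem_top : w ∈ ⊤)
    exact Subtype.ext (hnd v.1 hzero)
  calc Module.finrank ℂ (Vp p)
      ≤ Module.finrank ℂ (Module.Dual ℂ (Vp (1 - p))) :=
        LinearMap.finrank_le_finrank_of_injective hinj
    _ = Module.finrank ℂ (Vp (1 - p)) := Subspace.dual_finrank_eq

/-- If a nondegenerate alternating bilinear form `Ω` on a finite-dimensional complex
vector space `V` pairs the summands of an internal direct sum decomposition
`V = ⊕ₚ Vₚ` (indexed by `p ∈ ℤ`) only in complementary weights `p + q = 1`, and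
moreover `dim V = 2 dim V₀`, then `Vₚ = 0` for `p ∉ {0,1}`, `dim V₁ = dim V₀`, and
`V₀` and `V₁` are Lagrangian. -/
theorem weight_decomposition_lagrangian
    (V : Type*) [AddCommGroup V] [Module ℂ V] [FiniteDimensional ℂ V]
    (Ω : V →ₗ[ℂ] V →ₗ[ℂ] ℂ)
    (halt : ∀ v : V, Ω v v = 0)
    (hnd : ∀ v : V, (∀ w : V, Ω v w = 0) → v = 0)
    (Vp : ℤ → Submodule ℂ V)
    (hint : DirectSum.IsInternal Vp)
    (hpair : ∀ (p q : ℤ) (v w : V), v ∈ Vp p → w ∈ Vp q → p + q ≠ 1 → Ω v w = 0)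
    (hdim : Module.finrank ℂ V = 2 * Module.finrank ℂ (Vp 0)) :
    (∀ p : ℤ, p ≠ 0 → p ≠ 1 → Vp p = ⊥) ∧
    Module.finrank ℂ (Vp 1) = Module.finrank ℂ (Vp 0) ∧
    ((∀ v ∈ Vp 0, ∀ w ∈ Vp 0, Ω v w = 0) ∧
      Module.finrank ℂ (Vp 0) = Module.finrank ℂ V / 2) ∧
    ((∀ v ∈ Vp 1, ∀ w ∈ Vp 1, Ω v w = 0) ∧
      Module.finrank ℂ (Vp 1) = Module.finrank ℂ V / 2) := by
  have h10 : Module.finrank ℂ (Vp 1) = Module.finrank ℂ (Vp 0) := by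
    have h1 := weight_aux_le V Ω hnd Vp hint hpair 1
    have h2 := weight_aux_le V Ω hnd Vp hint hpair 0
    rw [show (1:ℤ) - 1 = 0 by norm_num] at h1
    rw [show (1:ℤ) - 0 = 1 by norm_num] at h2
    omega
  have hindep := hint.submodule_iSupIndep
  have hdisj : Vp 0 ⊓ Vp 1 = ⊥ :=
    (hindep.pairwiseDisjoint (by norm_num : (0 : ℤ) ≠ 1)).eq_bot
  have hsup : Module.finrank ℂ ↥(Vp 0 ⊔ Vp 1) = Module.finrank ℂ V := by
    have := Submodule.finrank_sup_add_finrank_inf_eq (Vp 0) (Vp 1)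
    rw [hdisj] at this
    simp only [finrank_bot] at this
    omega
  have htop : Vp 0 ⊔ Vp 1 = ⊤ := Submodule.eq_top_of_finrank_eq hsup
  have hbot : ∀ p : ℤ, p ≠ 0 → p ≠ 1 → Vp p = ⊥ := by
    intro p hp0 hp1
    have hle : Vp 0 ⊔ Vp 1 ≤ ⨆ (j) (_ : j ≠ p), Vp j := by
      apply sup_le
      · exact le_iSup_of_le 0 (le_iSup_of_le hp0.symm le_rfl)
      · exact le_iSup_of_le 1 (le_iSup_of_le hp1.symm le_rfl)
    have hd := hindep p
    have : Vp p ≤ ⊥ := by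
      have : Vp p ≤ Vp p ⊓ (⨆ (j) (_ : j ≠ p), Vp j) :=
        le_inf le_rfl (htop ▸ le_top |>.trans (htop ▸ hle))
      exact this.trans (le_of_eq hd.eq_bot)
    exact le_bot_iff.mp this
  refine ⟨hbot, h10, ⟨?_, by omega⟩, ⟨?_, by omega⟩⟩
  · exact fun v hv w hw => hpair 0 0 v w hv hw (by norm_num)
  · exact fun v hv w hw => hpair 1 1 v w hv hw (by norm_num)
end

section
/- Let V be a finite-dimensional complex vector space and let W = V × V* carry the canonical symplectic form ω((v,φ),(w,ψ)) = ψ(v) − φ(w). Let f : W → W be a differentiable map such that: (i) for every z ∈ W the derivative Df_z preserves ω, i.e. ω(Df_z(u), Df_z(u')) = ω(u,u') for all u,u'; (ii) f is equivariant for fiber scaling, i.e. f(v, λφ) = σ_λ(f(v,φ)) for all λ ∈ ℂˣ and (v,φ) ∈ W, where σ_λ(w,ψ) = (w, λψ); (iii) f is the identity on the zero section, i.e. f(v,0) = (v,0) for all v ∈ V. Then f is the identity map of W. -/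
/-!
Letting `λ → 0` in the equivariance and using `f (v, 0) = (v, 0)` shows that `f` fixes the
first factor, so `λ ↦ f (v, λ • φ)` is the ray `λ ↦ (v, λ • (f (v, φ)).2)`; differentiating at
`λ = 0` gives `Df_{(v,0)} (0, φ) = (0, (f (v, φ)).2)`. Since `Df_{(v,0)}` preserves `ω` and fixes
first components, pairing with horizontal vectors `(u, 0)` shows that it fixes `(0, φ)`.
-/

open Filter Topology

section

variable {𝕜 : Type*} [NontriviallyNormedField 𝕜] {E F : Type*} [TopologicalSpace E] [T2Space E]
  [NormedAddCommGroup F] [NormedSpace 𝕜 F]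

theorem fst_eq_of_units_smul_equivariant {f : E × F → E × F} (hf : Continuous f)
    (hequiv : ∀ (l : 𝕜ˣ) (x : E) (y : F),
      f (x, (l : 𝕜) • y) = ((f (x, y)).1, (l : 𝕜) • (f (x, y)).2))
    (hzero : ∀ x : E, f (x, 0) = (x, 0)) (z : E × F) : (f z).1 = z.1 := by
  obtain ⟨x, y⟩ := z
  have hlim : Tendsto (fun c : 𝕜 => (f (x, c • y)).1) (𝓝[≠] 0) (𝓝 x) := by
    have hcont : Continuous fun c : 𝕜 => (f (x, c • y)).1 := by fun_prop
    simpa [hzero] using (hcont.tendsto 0).mono_left nhdsWithin_le_nhds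
  have hconst : (fun _ : 𝕜 => (f (x, y)).1) =ᶠ[𝓝[≠] 0] fun c => (f (x, c • y)).1 := by
    filter_upwards [self_mem_nhdsWithin] with c (hc : c ≠ 0)
    simpa using (congrArg Prod.fst (hequiv (Units.mk0 c hc) x y)).symm
  exact tendsto_nhds_unique (tendsto_const_nhds.congr' hconst) hlim

theorem smul_equivariant_of_units_smul_equivariant {f : E × F → E × F} (hf : Continuous f)
    (hequiv : ∀ (l : 𝕜ˣ) (x : E) (y : F),
      f (x, (l : 𝕜) • y) = ((f (x, y)).1, (l : 𝕜) • (f (x, y)).2))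
    (hzero : ∀ x : E, f (x, 0) = (x, 0)) (c : 𝕜) (x : E) (y : F) :
    f (x, c • y) = (x, c • (f (x, y)).2) := by
  rcases eq_or_ne c 0 with rfl | hc
  · simp [hzero]
  · simpa [fst_eq_of_units_smul_equivariant hf hequiv hzero] using hequiv (Units.mk0 c hc) x y

end

section

variable {𝕜 : Type*} [NontriviallyNormedField 𝕜]
  {E F G : Type*} [NormedAddCommGroup E] [NormedSpace 𝕜 E] [NormedAddCommGroup F]
  [NormedSpace 𝕜 F] [NormedAddCommGroup G] [NormedSpace 𝕜 G]

theorem fderiv_apply_fst_of_fst_eq {f : E × F → E × G} {z : E × F}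
    (hf : DifferentiableAt 𝕜 f z) (hfst : ∀ z, (f z).1 = z.1) (u : E × F) :
    (fderiv 𝕜 f z u).1 = u.1 := by
  have h := fderiv.fst hf
  rw [show (fun z => (f z).1) = Prod.fst from funext hfst, fderiv_fst] at h
  exact (DFunLike.congr_fun h u).symm

theorem fderiv_apply_zero_prod_of_smul_eq {f : E × F → E × G} {x : E} {y : F} {w : G}
    (hf : DifferentiableAt 𝕜 f (x, 0)) (hray : ∀ c : 𝕜, f (x, c • y) = (x, c • w)) :
    fderiv 𝕜 f (x, 0) (0, y) = (0, w) := by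
  have hline : HasDerivAt (fun c : 𝕜 => (x, c • y)) (0, y) 0 := by
    simpa using (hasDerivAt_const (0 : 𝕜) x).prodMk ((hasDerivAt_id (0 : 𝕜)).smul_const y)
  have hchain : HasDerivAt (fun c : 𝕜 => f (x, c • y)) (fderiv 𝕜 f (x, 0) (0, y)) 0 :=
    hf.hasFDerivAt.comp_hasDerivAt_of_eq 0 hline (by simp)
  have hray' : HasDerivAt (fun c : 𝕜 => f (x, c • y)) (0, w) 0 := by
    simpa [hray] using (hasDerivAt_const (0 : 𝕜) x).prodMk ((hasDerivAt_id (0 : 𝕜)).smul_const w)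
  exact hchain.unique hray'

end

section

variable {𝕜 : Type*} [NontriviallyNormedField 𝕜] {V : Type*} [NormedAddCommGroup V]
  [NormedSpace 𝕜 V]

def canonicalSymplecticForm (p q : V × (V →L[𝕜] 𝕜)) : 𝕜 := q.2 p.1 - p.2 q.1

theorem snd_apply_zero_prod_of_preserves_canonicalSymplecticForm
    {L : V × (V →L[𝕜] 𝕜) → V × (V →L[𝕜] 𝕜)}
    (hL : ∀ u u', canonicalSymplecticForm (L u) (L u') = canonicalSymplecticForm u u')
    (hfst : ∀ u, (L u).1 = u.1) (ψ : V →L[𝕜] 𝕜) : (L (0, ψ)).2 = ψ := by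
  ext u
  simpa [canonicalSymplecticForm, hfst] using hL (u, 0) (0, ψ)

end

theorem symplectic_equivariant_rigidity_general
    (V : Type*) [NormedAddCommGroup V] [NormedSpace ℂ V]
    (ω : (V × (V →L[ℂ] ℂ)) → (V × (V →L[ℂ] ℂ)) → ℂ)
    (hω : ∀ p q : V × (V →L[ℂ] ℂ), ω p q = q.2 p.1 - p.2 q.1)
    (f : V × (V →L[ℂ] ℂ) → V × (V →L[ℂ] ℂ))
    (hdiff : Differentiable ℂ f)
    (hsymp : ∀ (z u u' : V × (V →L[ℂ] ℂ)),
      ω (fderiv ℂ f z u) (fderiv ℂ f z u') = ω u u')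
    (hequiv : ∀ (l : ℂˣ) (v : V) (φ : V →L[ℂ] ℂ),
      f (v, (l : ℂ) • φ) = ((f (v, φ)).1, (l : ℂ) • (f (v, φ)).2))
    (hzero : ∀ v : V, f (v, 0) = (v, 0)) :
    f = id := by
  obtain rfl : ω = canonicalSymplecticForm := funext₂ hω
  have hfst := fst_eq_of_units_smul_equivariant hdiff.continuous hequiv hzero
  funext ⟨v, φ⟩
  refine Prod.ext (hfst _) ?_
  have hDf : fderiv ℂ f (v, 0) (0, φ) = (0, (f (v, φ)).2) :=
    fderiv_apply_zero_prod_of_smul_eq (hdiff _) fun c =>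
      smul_equivariant_of_units_smul_equivariant hdiff.continuous hequiv hzero c v φ
  calc (f (v, φ)).2 = (fderiv ℂ f (v, 0) (0, φ)).2 := by rw [hDf]
    _ = φ := snd_apply_zero_prod_of_preserves_canonicalSymplecticForm (hsymp (v, 0))
        (fderiv_apply_fst_of_fst_eq (hdiff _) hfst) φ

/-- Rigidity: a differentiable self-map of `W = V × V*` whose derivative everywhere
preserves the canonical symplectic form, which is equivariant for the fiber-scaling
`ℂ*`-action `σ_λ(w,ψ) = (w, λψ)`, and which is the identity on the zero section, is
the identity map. -/
theorem symplectic_equivariant_rigidity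
    (V : Type*) [NormedAddCommGroup V] [NormedSpace ℂ V] [FiniteDimensional ℂ V]
    (ω : (V × (V →L[ℂ] ℂ)) → (V × (V →L[ℂ] ℂ)) → ℂ)
    (hω : ∀ p q : V × (V →L[ℂ] ℂ), ω p q = q.2 p.1 - p.2 q.1)
    (f : V × (V →L[ℂ] ℂ) → V × (V →L[ℂ] ℂ))
    (hdiff : Differentiable ℂ f)
    (hsymp : ∀ (z u u' : V × (V →L[ℂ] ℂ)),
      ω (fderiv ℂ f z u) (fderiv ℂ f z u') = ω u u')
    (hequiv : ∀ (l : ℂˣ) (v : V) (φ : V →L[ℂ] ℂ),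
      f (v, (l : ℂ) • φ) = ((f (v, φ)).1, (l : ℂ) • (f (v, φ)).2))
    (hzero : ∀ v : V, f (v, 0) = (v, 0)) :
    f = id :=
  symplectic_equivariant_rigidity_general V ω hω f hdiff hsymp hequiv hzero
end

section
/- Fix natural numbers n, q and ε ∈ {0,1}, and let e = (e₁ ≥ e₂ ≥ …) be a partition of n (a non-increasing sequence of natural numbers with finite support summing to n) such that e_i is odd for i ≤ q and e_i is even for i > q. Define I(e) = { j ≥ 1 | j ≡ n+1 (mod 2), e_j ≡ ε (mod 2), and e_j ≥ e_{j+1} + 2 }, and define S(e) by S(e)_j = e_j − 1 if j ∈ I(e), S(e)_j = e_j + 1 if j−1 ∈ I(e), and S(e)_j = e_j otherwise. Then: (a) no index j satisfies both j ∈ I(e) and j−1 ∈ I(e), so S(e) is well defined; (b) S(e) is again non-increasing; and (c) the parts of S(e) sum to n, i.e. S(e) is a partition of n. -/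
open scoped Classical in
/-- The Spaltenstein map is well defined: for a partition `e` of `n` (parts indexed
from `1`, non-increasing, finitely supported) with `e_i` odd for `1 ≤ i ≤ q` and even
for `i > q`, and `I(e) = {j ≥ 1 | j ≡ n+1 (mod 2), e_j ≡ ε (mod 2), e_j ≥ e_{j+1}+2}`,
the sequence `S(e)` given by `S(e)_j = e_j − 1` for `j ∈ I(e)`, `e_j + 1` for
`j−1 ∈ I(e)`, and `e_j` otherwise, is well defined (no `j` has both `j ∈ I(e)` and
`j−1 ∈ I(e)`), non-increasing, and is again a partition of `n`. -/
theorem spaltenstein_map_well_defined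
    (n q ε : ℕ) (hε : ε ≤ 1)
    (e : ℕ → ℕ) (he0 : e 0 = 0)
    (hdec : ∀ j, 1 ≤ j → e (j + 1) ≤ e j)
    (hfin : ∃ N, ∀ j, N ≤ j → e j = 0)
    (hsum : ∑ᶠ j, e j = n)
    (hodd : ∀ i, 1 ≤ i → i ≤ q → Odd (e i))
    (heven : ∀ i, q < i → Even (e i))
    (I : ℕ → Prop)
    (hI : ∀ j, I j ↔ 1 ≤ j ∧ j % 2 = (n + 1) % 2 ∧ e j % 2 = ε ∧ e (j + 1) + 2 ≤ e j)
    (S : ℕ → ℕ)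
    (hS : ∀ j, S j = if I j then e j - 1 else if I (j - 1) then e j + 1 else e j) :
    (∀ j, ¬ (I j ∧ I (j - 1))) ∧
    (∀ j, 1 ≤ j → S (j + 1) ≤ S j) ∧
    ∑ᶠ j, S j = n := by
  -- part (a)
  have ha : ∀ j, ¬ (I j ∧ I (j - 1)) := by
    intro j ⟨h1, h2⟩
    have a1 := (hI j).mp h1
    have a2 := (hI (j - 1)).mp h2
    omega
  refine ⟨ha, ?_, ?_⟩
  -- part (b)
  · intro j hj
    rw [hS (j + 1), hS j]
    have hsimp : j + 1 - 1 = j := by omega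
    rw [hsimp]
    by_cases h1 : I (j + 1)
    · by_cases h0 : I j
      · have a1 := (hI (j + 1)).mp h1
        have a0 := (hI j).mp h0
        omega
      · rw [if_pos h1, if_neg h0]
        have := hdec j hj
        split_ifs <;> omega
    · by_cases h0 : I j
      · rw [if_neg h1, if_pos h0, if_pos h0]
        have a0 := (hI j).mp h0
        omega
      · rw [if_neg h1, if_neg h0, if_neg h0]
        have := hdec j hj
        split_ifs <;> omega
  -- part (c)
  · obtain ⟨N, hN⟩ := hfin
    have hInot : ∀ j, N ≤ j → ¬ I j := by
      intro j h hj
      have a := (hI j).mp hj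
      have := hN j h
      omega
    have hI0 : ¬ I 0 := fun h => by have := (hI 0).mp h; omega
    have hSzero : ∀ j, N + 1 ≤ j → S j = 0 := by
      intro j h
      rw [hS j, if_neg (hInot j (by omega)), if_neg (hInot (j - 1) (by omega))]
      exact hN j (by omega)
    have hSsupp : Function.support S ⊆ ↑(Finset.range (N + 2)) := by
      intro j hj
      simp only [Finset.coe_range, Set.mem_Iio]
      by_contra h
      exact hj (hSzero j (by omega))
    have hesupp : Function.support e ⊆ ↑(Finset.range (N + 2)) := by
      intro j hj
      simp only [Finset.coe_range, Set.mem_Iio]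
      by_contra h
      exact hj (hN j (by omega))
    rw [finsum_eq_finset_sum_of_support_subset S hSsupp]
    rw [finsum_eq_finset_sum_of_support_subset e hesupp] at hsum
    -- key pointwise identity
    have key : ∀ j, S j + (if I j then 1 else 0) = e j + (if I (j - 1) then 1 else 0) := by
      intro j
      rw [hS j]
      by_cases h0 : I j
      · have := ha j
        have a0 := (hI j).mp h0
        rw [if_pos h0, if_pos h0, if_neg (fun h => this ⟨h0, h⟩)]
        omega
      · rw [if_neg h0, if_neg h0]
        split_ifs <;> omega
    have hsum2 : (∑ j ∈ Finset.range (N + 2), S j)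
        + (∑ j ∈ Finset.range (N + 2), if I j then 1 else 0)
        = (∑ j ∈ Finset.range (N + 2), e j)
        + (∑ j ∈ Finset.range (N + 2), if I (j - 1) then 1 else 0) := by
      rw [← Finset.sum_add_distrib, ← Finset.sum_add_distrib]
      exact Finset.sum_congr rfl fun j _ => key j
    have hshift : (∑ j ∈ Finset.range (N + 2), if I (j - 1) then 1 else 0)
        = ∑ j ∈ Finset.range (N + 1), if I j then 1 else 0 := by
      rw [Finset.sum_range_succ' (fun j => if I (j - 1) then 1 else 0) (N + 1)]
      simp only [Nat.add_sub_cancel, Nat.zero_sub, if_neg hI0, add_zero]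
    have hlast : (∑ j ∈ Finset.range (N + 2), if I j then 1 else 0)
        = ∑ j ∈ Finset.range (N + 1), if I j then 1 else 0 := by
      rw [Finset.sum_range_succ, if_neg (hInot (N + 1) (by omega)), add_zero]
    omega
end
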